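/- arXiv:1107.2340 — 4 statements merged into one kernel-verified Lean document; each statement's English description precedes it below -/
import Mathlib

section
/- Let S = {(−1,0),(−1,1),(0,1),(1,−1)}. For every z ∈ (0,1/4) and every x ∈ ℂ with |x| = 1, the polynomial z(1+x)Y² + (z−x)Y + zx² in Y has a root Y₀ with |Y₀| < 1, and every complex root other than Y₀ has modulus > 1. Similarly, for every y ∈ ℂ with |y| = 1, the polynomial zX² + (zy²−y)X + zy(1+y) in X has a root X₀ with |X₀| < 1, and every complex root other than X₀ has modulus > 1. -/
lemma quad_one_root_inside (a b c : ℂ) (ha : a ≠ 0) (h : ‖a‖ + ‖c‖ < ‖b‖) :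
    ∃ Y₀ : ℂ, (a * Y₀ ^ 2 + b * Y₀ + c = 0 ∧ ‖Y₀‖ < 1) ∧
      ∀ Y : ℂ, a * Y ^ 2 + b * Y + c = 0 → Y ≠ Y₀ → 1 < ‖Y‖ := by
  obtain ⟨w, hw⟩ := IsAlgClosed.exists_pow_nat_eq (k := ℂ) (b ^ 2 - 4 * a * c) (n := 2) (by norm_num)
  set r : ℂ := (-b + w) / (2 * a) with hr
  set s : ℂ := (-b - w) / (2 * a) with hs'
  have h2a : (2 : ℂ) * a ≠ 0 := by simp [ha]
  have hr2 : (2 * a) * r = -b + w := by rw [hr]; field_simp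
  have hs2 : (2 * a) * s = -b - w := by rw [hs']; field_simp
  clear_value r s
  have hsum : a * (r + s) = -b := by linear_combination (1/2) * hr2 + (1/2) * hs2
  have hprod' : a * (a * (r * s)) = a * c := by
    linear_combination (a * s / 2) * hr2 - ((b - w) / 4) * hs2 - (1/4) * hw
  have hprod : a * (r * s) = c := mul_left_cancel₀ ha hprod'
  have hfac : ∀ Y : ℂ, a * Y ^ 2 + b * Y + c = a * (Y - r) * (Y - s) := by
    intro Y; linear_combination Y * hsum - hprod
  have hA : (0 : ℝ) < ‖a‖ := norm_pos_iff.mpr ha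
  have hb : ‖b‖ ≤ ‖a‖ * (‖r‖ + ‖s‖) := by
    calc ‖b‖ = ‖a * (r + s)‖ := by rw [hsum]; simp
    _ = ‖a‖ * ‖r + s‖ := norm_mul _ _
    _ ≤ ‖a‖ * (‖r‖ + ‖s‖) := by gcongr; exact norm_add_le _ _
  have hc : ‖c‖ = ‖a‖ * (‖r‖ * ‖s‖) := by rw [← hprod]; simp [norm_mul]
  have key : (‖r‖ - 1) * (1 - ‖s‖) > 0 := by nlinarith [hc, hb, h]
  have root_r : a * r ^ 2 + b * r + c = 0 := by rw [hfac]; ring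
  have root_s : a * s ^ 2 + b * s + c = 0 := by rw [hfac]; ring
  have cases' : ∀ Y : ℂ, a * Y ^ 2 + b * Y + c = 0 → Y = r ∨ Y = s := by
    intro Y hY
    rw [hfac] at hY
    rcases mul_eq_zero.mp hY with h1 | h1
    · rcases mul_eq_zero.mp h1 with h2 | h2
      · exact absurd h2 ha
      · exact Or.inl (sub_eq_zero.mp h2)
    · exact Or.inr (sub_eq_zero.mp h1)
  rcases lt_or_ge ‖r‖ 1 with hR | hR
  · have hS : 1 < ‖s‖ := by nlinarith
    exact ⟨r, ⟨root_r, hR⟩, fun Y hY hne => by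
      rcases cases' Y hY with rfl | rfl
      · exact absurd rfl hne
      · exact hS⟩
  · have hR' : 1 < ‖r‖ := by
      rcases hR.lt_or_eq with h1 | h1
      · exact h1
      · exfalso; rw [← h1] at key; norm_num at key
    have hS : ‖s‖ < 1 := by nlinarith
    exact ⟨s, ⟨root_s, hS⟩, fun Y hY hne => by
      rcases cases' Y hY with rfl | rfl
      · exact hR'
      · exact absurd rfl hne⟩


/-- For the step set `S = {(−1,0),(−1,1),(0,1),(1,−1)}` and `z ∈ (0,1/4)`:
for `|x| = 1` the kernel polynomial in `Y`, namely `z(1+x)Y² + (z−x)Y + zx²`, has a root `Y₀`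
of modulus `< 1`, and every other complex root has modulus `> 1`; and for `|y| = 1` the kernel
polynomial in `X`, namely `zX² + (zy²−y)X + zy(1+y)`, has a root `X₀` of modulus `< 1`, and
every other complex root has modulus `> 1`. -/
theorem kernel_roots_unit_circle (z : ℝ) (hz : z ∈ Set.Ioo (0 : ℝ) (1 / 4)) :
    (∀ x : ℂ, ‖x‖ = 1 →
      ∃ Y₀ : ℂ,
        ((z : ℂ) * (1 + x) * Y₀ ^ 2 + ((z : ℂ) - x) * Y₀ + (z : ℂ) * x ^ 2 = 0 ∧ ‖Y₀‖ < 1) ∧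
        ∀ Y : ℂ, (z : ℂ) * (1 + x) * Y ^ 2 + ((z : ℂ) - x) * Y + (z : ℂ) * x ^ 2 = 0 →
          Y ≠ Y₀ → 1 < ‖Y‖) ∧
    (∀ y : ℂ, ‖y‖ = 1 →
      ∃ X₀ : ℂ,
        ((z : ℂ) * X₀ ^ 2 + ((z : ℂ) * y ^ 2 - y) * X₀ + (z : ℂ) * y * (1 + y) = 0 ∧
          ‖X₀‖ < 1) ∧
        ∀ X : ℂ, (z : ℂ) * X ^ 2 + ((z : ℂ) * y ^ 2 - y) * X + (z : ℂ) * y * (1 + y) = 0 →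
          X ≠ X₀ → 1 < ‖X‖) := by
  obtain ⟨hz0, hz4⟩ := hz
  have hzc : ‖(z : ℂ)‖ = z := by
    rw [Complex.norm_real, Real.norm_eq_abs, abs_of_pos hz0]
  have hzne : (z : ℂ) ≠ 0 := by
    exact_mod_cast ne_of_gt hz0
  constructor
  · intro x hx
    by_cases hx1 : x = -1
    · subst hx1
      have hz1 : (z : ℂ) + 1 ≠ 0 := by
        have : ((z + 1 : ℝ) : ℂ) ≠ 0 := by exact_mod_cast ne_of_gt (by linarith : (0:ℝ) < z + 1)
        push_cast at this; exact this
      refine ⟨((-(z / (z + 1)) : ℝ) : ℂ), ⟨?_, ?_⟩, ?_⟩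
      · push_cast
        field_simp
        ring
      · rw [Complex.norm_real, Real.norm_eq_abs, abs_neg,
          abs_of_pos (by positivity : (0:ℝ) < z / (z + 1))]
        rw [div_lt_one (by linarith)]
        linarith
      · intro Y hY hne
        exfalso
        apply hne
        have hYeq : ((z : ℂ) + 1) * Y = -(z : ℂ) := by linear_combination hY
        have : Y = -(z : ℂ) / ((z : ℂ) + 1) := by
          field_simp at hYeq ⊢
          linear_combination hYeq
        rw [this]
        push_cast
        ring
    · apply quad_one_root_inside
      · exact mul_ne_zero hzne (fun h => hx1 (by linear_combination h))
      · have h1x : ‖(1 : ℂ) + x‖ ≤ 2 := by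
          calc ‖(1 : ℂ) + x‖ ≤ ‖(1 : ℂ)‖ + ‖x‖ := norm_add_le _ _
          _ = 2 := by rw [hx, norm_one]; norm_num
        have e1 : ‖(z : ℂ) * (1 + x)‖ ≤ 2 * z := by
          rw [norm_mul, hzc]; nlinarith
        have e2 : ‖(z : ℂ) * x ^ 2‖ = z := by
          rw [norm_mul, norm_pow, hx, hzc]; norm_num
        have e3 : 1 - z ≤ ‖(z : ℂ) - x‖ := by
          calc 1 - z = ‖x‖ - ‖(z : ℂ)‖ := by rw [hx, hzc]
          _ ≤ ‖x - (z : ℂ)‖ := norm_sub_norm_le _ _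
          _ = ‖(z : ℂ) - x‖ := norm_sub_rev _ _
        nlinarith
  · intro y hy
    apply quad_one_root_inside
    · exact hzne
    · have h1y : ‖(1 : ℂ) + y‖ ≤ 2 := by
        calc ‖(1 : ℂ) + y‖ ≤ ‖(1 : ℂ)‖ + ‖y‖ := norm_add_le _ _
        _ = 2 := by rw [hy, norm_one]; norm_num
      have e1 : ‖(z : ℂ) * y * (1 + y)‖ ≤ 2 * z := by
        rw [norm_mul, norm_mul, hzc, hy]; nlinarith
      have e3 : 1 - z ≤ ‖(z : ℂ) * y ^ 2 - y‖ := by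
        have hb : (z : ℂ) * y ^ 2 - y = y * ((z : ℂ) * y - 1) := by ring
        rw [hb, norm_mul, hy, one_mul]
        calc 1 - z = ‖(1 : ℂ)‖ - ‖(z : ℂ) * y‖ := by
              rw [norm_one, norm_mul, hzc, hy]; ring
        _ ≤ ‖(1 : ℂ) - (z : ℂ) * y‖ := norm_sub_norm_le _ _
        _ = ‖(z : ℂ) * y - 1‖ := norm_sub_rev _ _
      rw [hzc]
      nlinarith
end

section
/- Let S = {(−1,0),(−1,1),(0,1),(1,−1)} and for z ∈ (0,1/4) define d(x;z) = (z−x)² − 4z²x²(1+x). Then for every z ∈ (0,1/4), the cubic polynomial x ↦ d(x;z) has exactly three real roots, all simple, denoted x₁(z) < x₂(z) < x₃(z), and they satisfy 0 < x₁(z) < x₂(z) < 1 < x₃(z). Moreover d(x;z) > 0 for x ∈ (−∞, x₁(z)) ∪ (x₂(z), x₃(z)) and d(x;z) < 0 for x ∈ (x₁(z), x₂(z)) ∪ (x₃(z), +∞). -/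
/-! The values of `d(·; z)` at `0, z, 1, 1/(4z²)` have signs `+, −, +, −`, so by the
intermediate value theorem it has roots `x₁ ∈ (0, z)`, `x₂ ∈ (z, 1)`, `x₃ ∈ (1, 1/(4z²))`.
Being a cubic with leading coefficient `−4z²`, it then equals `−4z² (x − x₁)(x − x₂)(x − x₃)`,
from which the simplicity of the roots and the sign pattern are read off. -/

/-- The discriminant `d(x; z) = (z − x)² − 4z²x²(1 + x)` of the kernel of the walk with
step set `S = {(−1,0),(−1,1),(0,1),(1,−1)}`. -/
def ddisc (z x : ℝ) : ℝ := (z - x) ^ 2 - 4 * z ^ 2 * x ^ 2 * (1 + x)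

section Cubic

variable {K : Type*} [CommRing K] [IsDomain K]

theorem quadratic_coeffs_eq_zero_of_three_roots {A B C r₁ r₂ r₃ : K}
    (h₁₂ : r₁ ≠ r₂) (h₁₃ : r₁ ≠ r₃) (h₂₃ : r₂ ≠ r₃)
    (h₁ : A * r₁ ^ 2 + B * r₁ + C = 0) (h₂ : A * r₂ ^ 2 + B * r₂ + C = 0)
    (h₃ : A * r₃ ^ 2 + B * r₃ + C = 0) :
    A = 0 ∧ B = 0 ∧ C = 0 := by
  have e₁₂ : (r₁ - r₂) * (A * (r₁ + r₂) + B) = 0 := by linear_combination h₁ - h₂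
  have e₂₃ : (r₂ - r₃) * (A * (r₂ + r₃) + B) = 0 := by linear_combination h₂ - h₃
  have s₁₂ := (mul_eq_zero.1 e₁₂).resolve_left (sub_ne_zero.2 h₁₂)
  have s₂₃ := (mul_eq_zero.1 e₂₃).resolve_left (sub_ne_zero.2 h₂₃)
  have hA : A = 0 := by
    have e : (r₁ - r₃) * A = 0 := by linear_combination s₁₂ - s₂₃
    exact (mul_eq_zero.1 e).resolve_left (sub_ne_zero.2 h₁₃)
  have hB : B = 0 := by linear_combination s₁₂ - (r₁ + r₂) * hA
  exact ⟨hA, hB, by linear_combination h₁ - r₁ ^ 2 * hA - r₁ * hB⟩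

/-- Subtracting `a (x - r₁)(x - r₂)(x - r₃)` leaves a quadratic with three distinct roots. -/
theorem cubic_eq_mul_of_three_roots {a b c d r₁ r₂ r₃ : K}
    (h₁₂ : r₁ ≠ r₂) (h₁₃ : r₁ ≠ r₃) (h₂₃ : r₂ ≠ r₃)
    (h₁ : a * r₁ ^ 3 + b * r₁ ^ 2 + c * r₁ + d = 0)
    (h₂ : a * r₂ ^ 3 + b * r₂ ^ 2 + c * r₂ + d = 0)
    (h₃ : a * r₃ ^ 3 + b * r₃ ^ 2 + c * r₃ + d = 0) (x : K) :
    a * x ^ 3 + b * x ^ 2 + c * x + d = a * (x - r₁) * (x - r₂) * (x - r₃) := by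
  obtain ⟨hA, hB, hC⟩ := quadratic_coeffs_eq_zero_of_three_roots
    (A := b + a * (r₁ + r₂ + r₃)) (B := c - a * (r₁ * r₂ + r₁ * r₃ + r₂ * r₃))
    (C := d + a * (r₁ * r₂ * r₃)) h₁₂ h₁₃ h₂₃
    (by linear_combination h₁) (by linear_combination h₂) (by linear_combination h₃)
  linear_combination x ^ 2 * hA + x * hB + hC

theorem mul_sub_mul_sub_mul_sub_eq_zero_iff {a r₁ r₂ r₃ x : K} (ha : a ≠ 0) :
    a * (x - r₁) * (x - r₂) * (x - r₃) = 0 ↔ x = r₁ ∨ x = r₂ ∨ x = r₃ := by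
  simp [ha, sub_eq_zero, or_assoc]

end Cubic

section FactoredCubic

variable {𝕜 : Type*} [NontriviallyNormedField 𝕜]

theorem hasDerivAt_mul_sub_mul_sub_mul_sub (a r₁ r₂ r₃ x : 𝕜) :
    HasDerivAt (fun x => a * (x - r₁) * (x - r₂) * (x - r₃))
      (a * ((x - r₂) * (x - r₃) + (x - r₁) * (x - r₃) + (x - r₁) * (x - r₂))) x :=
  (((((hasDerivAt_id' x).sub_const r₁).const_mul a).fun_mul
    ((hasDerivAt_id' x).sub_const r₂)).fun_mul ((hasDerivAt_id' x).sub_const r₃)).congr_deriv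
    (by ring)

theorem deriv_mul_sub_mul_sub_mul_sub_ne_zero {a r₁ r₂ r₃ x : 𝕜} (ha : a ≠ 0)
    (h₁₂ : r₁ ≠ r₂) (h₁₃ : r₁ ≠ r₃) (h₂₃ : r₂ ≠ r₃) (hx : x = r₁ ∨ x = r₂ ∨ x = r₃) :
    deriv (fun x => a * (x - r₁) * (x - r₂) * (x - r₃)) x ≠ 0 := by
  rw [(hasDerivAt_mul_sub_mul_sub_mul_sub a r₁ r₂ r₃ x).deriv]
  rcases hx with rfl | rfl | rfl <;>
    simp [ha, sub_eq_zero, h₁₂, h₁₃, h₂₃, h₁₂.symm, h₁₃.symm, h₂₃.symm]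

end FactoredCubic

theorem mul_sub_mul_sub_mul_sub_pos_of_lt {a r₁ r₂ r₃ x : ℝ} (ha : a < 0) (h : x < r₁)
    (h₁₂ : r₁ < r₂) (h₂₃ : r₂ < r₃) : 0 < a * (x - r₁) * (x - r₂) * (x - r₃) :=
  mul_pos_of_neg_of_neg
    (mul_neg_of_pos_of_neg (mul_pos_of_neg_of_neg ha (by linarith)) (by linarith))
    (by linarith)

theorem mul_sub_mul_sub_mul_sub_neg_of_mem_Ioo₁₂ {a r₁ r₂ r₃ x : ℝ} (ha : a < 0)
    (h₁ : r₁ < x) (h₂ : x < r₂) (h₂₃ : r₂ < r₃) : a * (x - r₁) * (x - r₂) * (x - r₃) < 0 :=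
  mul_neg_of_pos_of_neg
    (mul_pos_of_neg_of_neg (mul_neg_of_neg_of_pos ha (by linarith)) (by linarith))
    (by linarith)

theorem mul_sub_mul_sub_mul_sub_pos_of_mem_Ioo₂₃ {a r₁ r₂ r₃ x : ℝ} (ha : a < 0)
    (h₁₂ : r₁ < r₂) (h₂ : r₂ < x) (h₃ : x < r₃) : 0 < a * (x - r₁) * (x - r₂) * (x - r₃) :=
  mul_pos_of_neg_of_neg
    (mul_neg_of_neg_of_pos (mul_neg_of_neg_of_pos ha (by linarith)) (by linarith))
    (by linarith)

theorem mul_sub_mul_sub_mul_sub_neg_of_gt {a r₁ r₂ r₃ x : ℝ} (ha : a < 0) (h₁₂ : r₁ < r₂)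
    (h₂₃ : r₂ < r₃) (h : r₃ < x) : a * (x - r₁) * (x - r₂) * (x - r₃) < 0 :=
  mul_neg_of_neg_of_pos
    (mul_neg_of_neg_of_pos (mul_neg_of_neg_of_pos ha (by linarith)) (by linarith))
    (by linarith)

theorem ddisc_eq_cubic (z x : ℝ) :
    ddisc z x = -(4 * z ^ 2) * x ^ 3 + (1 - 4 * z ^ 2) * x ^ 2 + -(2 * z) * x + z ^ 2 := by
  unfold ddisc; ring

theorem ddisc_zero_pos {z : ℝ} (hz : 0 < z) : 0 < ddisc z 0 := by
  simpa [ddisc] using pow_pos hz 2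

theorem ddisc_self_neg {z : ℝ} (hz : 0 < z) : ddisc z z < 0 := by
  unfold ddisc; nlinarith [pow_pos hz 4]

theorem ddisc_one_pos {z : ℝ} (hz : 0 < z) (hz' : z < 1 / 4) : 0 < ddisc z 1 := by
  unfold ddisc; nlinarith

/-- At `x = 1 / (4 z²)` the cubic term cancels `x²`, leaving `d = z² − (1 + 2z) x`. -/
theorem ddisc_inv_four_mul_sq_neg {z : ℝ} (hz : 0 < z) (hz' : z < 1 / 4) :
    ddisc z (1 / (4 * z ^ 2)) < 0 := by
  have hx : 4 < 1 / (4 * z ^ 2) := by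
    rw [lt_div_iff₀ (by positivity)]; nlinarith
  have e : ddisc z (1 / (4 * z ^ 2)) = z ^ 2 - (1 + 2 * z) * (1 / (4 * z ^ 2)) := by
    unfold ddisc; field_simp; ring
  rw [e]; nlinarith

theorem exists_ddisc_roots {z : ℝ} (hz : 0 < z) (hz' : z < 1 / 4) :
    ∃ x₁ x₂ x₃ : ℝ, 0 < x₁ ∧ x₁ < z ∧ z < x₂ ∧ x₂ < 1 ∧ 1 < x₃ ∧
      ddisc z x₁ = 0 ∧ ddisc z x₂ = 0 ∧ ddisc z x₃ = 0 := by
  have hcont : Continuous (ddisc z) := by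
    unfold ddisc; fun_prop
  have hX : 1 < 1 / (4 * z ^ 2) := by
    rw [lt_div_iff₀ (by positivity)]; nlinarith
  obtain ⟨x₁, ⟨hx₁, hx₁'⟩, h₁⟩ := intermediate_value_Ioo' hz.le hcont.continuousOn
    ⟨ddisc_self_neg hz, ddisc_zero_pos hz⟩
  obtain ⟨x₂, ⟨hx₂, hx₂'⟩, h₂⟩ := intermediate_value_Ioo (by linarith) hcont.continuousOn
    ⟨ddisc_self_neg hz, ddisc_one_pos hz hz'⟩
  obtain ⟨x₃, ⟨hx₃, -⟩, h₃⟩ := intermediate_value_Ioo' hX.le hcont.continuousOn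
    ⟨ddisc_inv_four_mul_sq_neg hz hz', ddisc_one_pos hz hz'⟩
  exact ⟨x₁, x₂, x₃, hx₁, hx₁', hx₂, hx₂', hx₃, h₁, h₂, h₃⟩

theorem ddisc_eq_of_roots {z x₁ x₂ x₃ : ℝ} (h₁₂ : x₁ ≠ x₂) (h₁₃ : x₁ ≠ x₃) (h₂₃ : x₂ ≠ x₃)
    (h₁ : ddisc z x₁ = 0) (h₂ : ddisc z x₂ = 0) (h₃ : ddisc z x₃ = 0) :
    ddisc z = fun x => -(4 * z ^ 2) * (x - x₁) * (x - x₂) * (x - x₃) := by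
  simp only [ddisc_eq_cubic] at h₁ h₂ h₃
  funext x
  rw [ddisc_eq_cubic]
  exact cubic_eq_mul_of_three_roots h₁₂ h₁₃ h₂₃ h₁ h₂ h₃ x

/-- For every `z ∈ (0,1/4)` the cubic `x ↦ d(x;z)` has exactly three real roots, all simple,
`0 < x₁ < x₂ < 1 < x₃`; moreover `d(·;z)` is positive on `(−∞,x₁) ∪ (x₂,x₃)` and negative
on `(x₁,x₂) ∪ (x₃,∞)`. -/
theorem ddisc_roots (z : ℝ) (hz : z ∈ Set.Ioo (0 : ℝ) (1 / 4)) :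
    ∃ x1 x2 x3 : ℝ,
      0 < x1 ∧ x1 < x2 ∧ x2 < 1 ∧ 1 < x3 ∧
      (∀ x : ℝ, ddisc z x = 0 ↔ (x = x1 ∨ x = x2 ∨ x = x3)) ∧
      deriv (ddisc z) x1 ≠ 0 ∧ deriv (ddisc z) x2 ≠ 0 ∧ deriv (ddisc z) x3 ≠ 0 ∧
      (∀ x : ℝ, x < x1 → 0 < ddisc z x) ∧
      (∀ x : ℝ, x2 < x → x < x3 → 0 < ddisc z x) ∧
      (∀ x : ℝ, x1 < x → x < x2 → ddisc z x < 0) ∧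
      (∀ x : ℝ, x3 < x → ddisc z x < 0) := by
  obtain ⟨hz, hz'⟩ := hz
  obtain ⟨x₁, x₂, x₃, hx₁, hx₁z, hzx₂, hx₂, hx₃, h₁, h₂, h₃⟩ := exists_ddisc_roots hz hz'
  have h₁₂ : x₁ < x₂ := hx₁z.trans hzx₂
  have h₂₃ : x₂ < x₃ := hx₂.trans hx₃
  have ha : -(4 * z ^ 2) < 0 := by nlinarith
  rw [ddisc_eq_of_roots h₁₂.ne (h₁₂.trans h₂₃).ne h₂₃.ne h₁ h₂ h₃]
  have hderiv := fun x => deriv_mul_sub_mul_sub_mul_sub_ne_zero (x := x) ha.ne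
    h₁₂.ne (h₁₂.trans h₂₃).ne h₂₃.ne
  exact ⟨x₁, x₂, x₃, hx₁, h₁₂, hx₂, hx₃,
    fun x => mul_sub_mul_sub_mul_sub_eq_zero_iff ha.ne,
    hderiv x₁ (.inl rfl), hderiv x₂ (.inr (.inl rfl)), hderiv x₃ (.inr (.inr rfl)),
    fun x hx => mul_sub_mul_sub_mul_sub_pos_of_lt ha hx h₁₂ h₂₃,
    fun x hx hx' => mul_sub_mul_sub_mul_sub_pos_of_mem_Ioo₂₃ ha h₁₂ hx hx',
    fun x hx hx' => mul_sub_mul_sub_mul_sub_neg_of_mem_Ioo₁₂ ha hx hx' h₂₃,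
    fun x hx => mul_sub_mul_sub_mul_sub_neg_of_gt ha h₁₂ h₂₃ hx⟩
end

section
/- Let d(x;z) = (z−x)² − 4z²x²(1+x), and for z ∈ (0,1/4) let x₁(z) < x₂(z) < x₃(z) denote the three real roots of d(·;z). Then as z → 0⁺: x₁(z) = z − 2z² + 3z³ + O(z⁴), x₂(z) = z + 2z² + 5z³ + O(z⁴), and x₃(z) = 1/(4z²) − 1 − 2z − 8z³ + O(z⁴); that is, there exist constants C > 0 and ε ∈ (0,1/4) such that for all z ∈ (0,ε), |x₁(z) − (z − 2z² + 3z³)| ≤ Cz⁴, |x₂(z) − (z + 2z² + 5z³)| ≤ Cz⁴, and |x₃(z) − (1/(4z²) − 1 − 2z − 8z³)| ≤ Cz⁴. -/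
lemma ddisc_continuous (z : ℝ) : Continuous (ddisc z) := by
  unfold ddisc; fun_prop

lemma exists_root_neg_pos (f : ℝ → ℝ) (hf : Continuous f) {a b : ℝ} (hab : a ≤ b)
    (ha : f a < 0) (hb : 0 < f b) : ∃ x ∈ Set.Icc a b, f x = 0 := by
  have h := intermediate_value_Icc hab hf.continuousOn
  obtain ⟨x, hx, hfx⟩ := h ⟨ha.le, hb.le⟩
  exact ⟨x, hx, hfx⟩

lemma exists_root_pos_neg (f : ℝ → ℝ) (hf : Continuous f) {a b : ℝ} (hab : a ≤ b)
    (ha : 0 < f a) (hb : f b < 0) : ∃ x ∈ Set.Icc a b, f x = 0 := by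
  obtain ⟨x, hx, hfx⟩ := exists_root_neg_pos (fun x => -(f x)) (hf.neg) hab
    (by simpa using ha) (by simpa using hb)
  exact ⟨x, hx, by linarith [hfx]⟩

section Signs

variable {z : ℝ} (hz : 0 < z) (hze : z < 1/100000)

lemma zpows (hz : 0 < z) (hze : z < 1/100000) :
    z ≤ 1 ∧ z^2 ≤ z ∧ z^3 ≤ z ∧ z^4 ≤ z ∧ z^5 ≤ z ∧ z^6 ≤ z ∧ z^7 ≤ z ∧ z^8 ≤ z ∧
    z^9 ≤ z ∧ z^10 ≤ z ∧ z^11 ≤ z ∧ z^12 ≤ z ∧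
    0 < z^2 ∧ 0 < z^3 ∧ 0 < z^4 ∧ 0 < z^5 ∧ 0 < z^6 ∧ 0 < z^7 ∧ 0 < z^8 ∧
    0 < z^9 ∧ 0 < z^10 ∧ 0 < z^11 ∧ 0 < z^12 := by
  have h1 : z ≤ 1 := by linarith
  refine ⟨h1, ?_, ?_, ?_, ?_, ?_, ?_, ?_, ?_, ?_, ?_, ?_, ?_, ?_, ?_, ?_, ?_, ?_, ?_, ?_, ?_, ?_, ?_⟩ <;>
    first
      | exact pow_le_of_le_one hz.le h1 (by norm_num)
      | positivity

lemma sign_a1 (hz : 0 < z) (hze : z < 1/100000) :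
    0 < ddisc z (z - 2*z^2 + 3*z^3 - 16*z^4) := by
  obtain ⟨h1, p2, p3, p4, p5, p6, p7, p8, p9, p10, p11, p12,
    q2, q3, q4, q5, q6, q7, q8, q9, q10, q11, q12⟩ := zpows hz hze
  have key : ddisc z (z - 2*z^2 + 3*z^3 - 16*z^4)
      = z^6 * (57 - 4*z + 332*z^2 - 636*z^3 + 1112*z^4 - 5484*z^5 + 7872*z^6 - 9216*z^7 + 16384*z^8) := by
    unfold ddisc; ring
  rw [key]
  have : (0:ℝ) < 57 - 4*z + 332*z^2 - 636*z^3 + 1112*z^4 - 5484*z^5 + 7872*z^6 - 9216*z^7 + 16384*z^8 := by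
    nlinarith [q2, q4, q6, p3, p5, p7]
  positivity

lemma sign_b1 (hz : 0 < z) (hze : z < 1/100000) :
    ddisc z (z - 2*z^2 + 3*z^3 + 16*z^4) < 0 := by
  obtain ⟨h1, p2, p3, p4, p5, p6, p7, p8, p9, p10, p11, p12,
    q2, q3, q4, q5, q6, q7, q8, q9, q10, q11, q12⟩ := zpows hz hze
  have key : ddisc z (z - 2*z^2 + 3*z^3 + 16*z^4)
      = z^6 * (-71 - 68*z + 460*z^2 + 132*z^3 - 2728*z^4 - 876*z^5 + 4416*z^6 - 9216*z^7 - 16384*z^8) := by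
    unfold ddisc; ring
  rw [key]
  have h : -71 - 68*z + 460*z^2 + 132*z^3 - 2728*z^4 - 876*z^5 + 4416*z^6 - 9216*z^7 - 16384*z^8 < 0 := by
    nlinarith [p2, p3, p6, q4, q5, q7, q8, hz]
  have hz6 : 0 < z^6 := q6
  nlinarith [mul_pos hz6 (neg_pos.mpr h)]

lemma sign_a2 (hz : 0 < z) (hze : z < 1/100000) :
    ddisc z (z + 2*z^2 + 5*z^3 - 16*z^4) < 0 := by
  obtain ⟨h1, p2, p3, p4, p5, p6, p7, p8, p9, p10, p11, p12,
    q2, q3, q4, q5, q6, q7, q8, q9, q10, q11, q12⟩ := zpows hz hze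
  have key : ddisc z (z + 2*z^2 + 5*z^3 - 16*z^4)
      = z^6 * (-119 - 220*z + 332*z^2 + 868*z^3 + 1064*z^4 + 268*z^5 - 1344*z^6 - 15360*z^7 + 16384*z^8) := by
    unfold ddisc; ring
  rw [key]
  have h : -119 - 220*z + 332*z^2 + 868*z^3 + 1064*z^4 + 268*z^5 - 1344*z^6 - 15360*z^7 + 16384*z^8 < 0 := by
    nlinarith [p2, p3, p4, p5, p8, q6, q7, hz]
  nlinarith [mul_pos q6 (neg_pos.mpr h)]

lemma sign_b2 (hz : 0 < z) (hze : z < 1/100000) :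
    0 < ddisc z (z + 2*z^2 + 5*z^3 + 16*z^4) := by
  obtain ⟨h1, p2, p3, p4, p5, p6, p7, p8, p9, p10, p11, p12,
    q2, q3, q4, q5, q6, q7, q8, q9, q10, q11, q12⟩ := zpows hz hze
  have key : ddisc z (z + 2*z^2 + 5*z^3 + 16*z^4)
      = z^6 * (9 - 156*z - 564*z^2 - 1948*z^3 - 4312*z^4 - 7412*z^5 - 10944*z^6 - 15360*z^7 - 16384*z^8) := by
    unfold ddisc; ring
  rw [key]
  have h : (0:ℝ) < 9 - 156*z - 564*z^2 - 1948*z^3 - 4312*z^4 - 7412*z^5 - 10944*z^6 - 15360*z^7 - 16384*z^8 := by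
    nlinarith [p2, p3, p4, p5, p6, p7, p8, hz]
  positivity

lemma sign_a3 (hz : 0 < z) (hze : z < 1/100000) :
    0 < ddisc z (1/(4*z^2) - 1 - 2*z - 8*z^3 - 16*z^4) := by
  obtain ⟨h1, p2, p3, p4, p5, p6, p7, p8, p9, p10, p11, p12,
    q2, q3, q4, q5, q6, q7, q8, q9, q10, q11, q12⟩ := zpows hz hze
  have hz0 : z ≠ 0 := ne_of_gt hz
  have key : ddisc z (1/(4*z^2) - 1 - 2*z - 8*z^3 - 16*z^4)
      = z^2 * (16 - 128*z - 768*z^2 - 512*z^3 + 3072*z^4 + 6144*z^5 + 12288*z^6 + 57344*z^7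
        + 131072*z^8 + 131072*z^9 + 196608*z^10 + 393216*z^11 + 262144*z^12) / 16 := by
    unfold ddisc; field_simp; ring
  rw [key]
  have h : (0:ℝ) < 16 - 128*z - 768*z^2 - 512*z^3 + 3072*z^4 + 6144*z^5 + 12288*z^6 + 57344*z^7
      + 131072*z^8 + 131072*z^9 + 196608*z^10 + 393216*z^11 + 262144*z^12 := by
    nlinarith [p2, p3, q4, q5, q6, q7, q8, q9, q10, q11, q12, hz]
  positivity

lemma sign_b3 (hz : 0 < z) (hze : z < 1/100000) :
    ddisc z (1/(4*z^2) - 1 - 2*z - 8*z^3 + 16*z^4) < 0 := by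
  obtain ⟨h1, p2, p3, p4, p5, p6, p7, p8, p9, p10, p11, p12,
    q2, q3, q4, q5, q6, q7, q8, q9, q10, q11, q12⟩ := zpows hz hze
  have hz0 : z ≠ 0 := ne_of_gt hz
  have key : ddisc z (1/(4*z^2) - 1 - 2*z - 8*z^3 + 16*z^4)
      = z^2 * (-112 - 128*z + 256*z^2 + 2560*z^3 + 1024*z^4 + 6144*z^5 - 12288*z^6 - 8192*z^7
        - 65536*z^8 + 131072*z^9 - 196608*z^10 + 393216*z^11 - 262144*z^12) / 16 := by
    unfold ddisc; field_simp; ring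
  rw [key]
  have h : -112 - 128*z + 256*z^2 + 2560*z^3 + 1024*z^4 + 6144*z^5 - 12288*z^6 - 8192*z^7
      - 65536*z^8 + 131072*z^9 - 196608*z^10 + 393216*z^11 - 262144*z^12 < 0 := by
    nlinarith [p2, p3, p4, p5, p9, p11, q6, q7, q8, q10, q12, hz]
  nlinarith [mul_pos q2 (neg_pos.mpr h)]

end Signs

set_option maxHeartbeats 1600000 in
/-- If, for each `z ∈ (0,1/4)`, `x₁(z) < x₂(z) < x₃(z)` are the three real roots of
`d(·;z)`, then as `z → 0⁺`: `x₁(z) = z − 2z² + 3z³ + O(z⁴)`, `x₂(z) = z + 2z² + 5z³ + O(z⁴)`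
and `x₃(z) = 1/(4z²) − 1 − 2z − 8z³ + O(z⁴)`. -/
theorem ddisc_roots_asymptotics (x1 x2 x3 : ℝ → ℝ)
    (hroots : ∀ z ∈ Set.Ioo (0 : ℝ) (1 / 4),
      x1 z < x2 z ∧ x2 z < x3 z ∧
      ∀ x : ℝ, ddisc z x = 0 ↔ (x = x1 z ∨ x = x2 z ∨ x = x3 z)) :
    ∃ C > (0 : ℝ), ∃ ε ∈ Set.Ioo (0 : ℝ) (1 / 4), ∀ z ∈ Set.Ioo (0 : ℝ) ε,
      |x1 z - (z - 2 * z ^ 2 + 3 * z ^ 3)| ≤ C * z ^ 4 ∧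
      |x2 z - (z + 2 * z ^ 2 + 5 * z ^ 3)| ≤ C * z ^ 4 ∧
      |x3 z - (1 / (4 * z ^ 2) - 1 - 2 * z - 8 * z ^ 3)| ≤ C * z ^ 4 := by
  refine ⟨16, by norm_num, 1/100000, by norm_num, ?_⟩
  intro z hzmem
  obtain ⟨hz, hze⟩ := hzmem
  obtain ⟨h1, p2, p3, p4, p5, p6, p7, p8, p9, p10, p11, p12,
    q2, q3, q4, q5, q6, q7, q8, q9, q10, q11, q12⟩ := zpows hz hze
  obtain ⟨hx12, hx23, hchar⟩ := hroots z ⟨hz, by linarith⟩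
  have hcont := ddisc_continuous z
  -- interval endpoints
  set a1 := z - 2*z^2 + 3*z^3 - 16*z^4 with ha1
  set b1 := z - 2*z^2 + 3*z^3 + 16*z^4 with hb1
  set a2 := z + 2*z^2 + 5*z^3 - 16*z^4 with ha2
  set b2 := z + 2*z^2 + 5*z^3 + 16*z^4 with hb2
  set a3 := 1/(4*z^2) - 1 - 2*z - 8*z^3 - 16*z^4 with ha3
  set b3 := 1/(4*z^2) - 1 - 2*z - 8*z^3 + 16*z^4 with hb3
  -- roots in each interval
  obtain ⟨r1, hr1mem, hr1⟩ := exists_root_pos_neg (ddisc z) hcont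
    (show a1 ≤ b1 by simp only [ha1, hb1]; nlinarith [q4]) (sign_a1 hz hze) (sign_b1 hz hze)
  obtain ⟨r2, hr2mem, hr2⟩ := exists_root_neg_pos (ddisc z) hcont
    (show a2 ≤ b2 by simp only [ha2, hb2]; nlinarith [q4]) (sign_a2 hz hze) (sign_b2 hz hze)
  obtain ⟨r3, hr3mem, hr3⟩ := exists_root_pos_neg (ddisc z) hcont
    (show a3 ≤ b3 by simp only [ha3, hb3]; nlinarith [q4]) (sign_a3 hz hze) (sign_b3 hz hze)
  -- ordering of intervals
  have hord1 : b1 < a2 := by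
    simp only [hb1, ha2]
    nlinarith [q2, p4]
  have hord2 : b2 < a3 := by
    have hb2lt : b2 < 2 := by simp only [hb2]; linarith [p2, p3, p4]
    have hinv : (4:ℝ) < 1/(4*z^2) := by
      rw [lt_div_iff₀ (by positivity : (0:ℝ) < 4*z^2)]
      nlinarith [q2]
    have : (2:ℝ) < a3 := by simp only [ha3]; nlinarith [p3, p4, q3, q4]
    linarith
  have hr12 : r1 < r2 := lt_of_le_of_lt hr1mem.2 (lt_of_lt_of_le hord1 hr2mem.1)
  have hr23 : r2 < r3 := lt_of_le_of_lt hr2mem.2 (lt_of_lt_of_le hord2 hr3mem.1)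
  have m1 := (hchar r1).mp hr1
  have m2 := (hchar r2).mp hr2
  have m3 := (hchar r3).mp hr3
  have heq : r1 = x1 z ∧ r2 = x2 z ∧ r3 = x3 z := by
    rcases m1 with h1'|h1'|h1' <;> rcases m2 with h2'|h2'|h2' <;> rcases m3 with h3'|h3'|h3' <;>
      exact ⟨by linarith, by linarith, by linarith⟩
  obtain ⟨e1, e2, e3⟩ := heq
  refine ⟨?_, ?_, ?_⟩
  · rw [abs_le]
    constructor
    · have := hr1mem.1; rw [ha1] at this; linarith
    · have := hr1mem.2; rw [hb1] at this; linarith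
  · rw [abs_le]
    constructor
    · have := hr2mem.1; rw [ha2] at this; linarith
    · have := hr2mem.2; rw [hb2] at this; linarith
  · rw [abs_le]
    constructor
    · have := hr3mem.1; rw [ha3] at this; linarith
    · have := hr3mem.2; rw [hb3] at this; linarith
end

section
/- Let d(x;z) = (z−x)² − 4z²x²(1+x), for z ∈ (0,1/4) let x₁(z) < x₂(z) < x₃(z) be the three real roots of d(·;z), and set k(z) = √((x₃(z)−x₂(z))/(x₃(z)−x₁(z))) and w(z) = √(x₁(z)/x₂(z)). Then as z → 0⁺: k(z) = 1 − 8z⁴ − 4z⁵ + O(z⁶) and w(z) = 1 − 2z + z² − (7/4)z³ − (65/8)z⁴ + (613/64)z⁵ + O(z⁶). -/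
set_option maxHeartbeats 4000000

private lemma order_id {a b c r1 r2 r3 : ℝ} (hab : a < b) (hbc : b < c)
    (h12 : r1 < r2) (h23 : r2 < r3)
    (e1 : r1 = a ∨ r1 = b ∨ r1 = c) (e2 : r2 = a ∨ r2 = b ∨ r2 = c)
    (e3 : r3 = a ∨ r3 = b ∨ r3 = c) : a = r1 ∧ b = r2 ∧ c = r3 := by
  rcases e1 with h1|h1|h1 <;> rcases e2 with h2|h2|h2 <;> rcases e3 with h3|h3|h3 <;>
    exact ⟨by linarith, by linarith, by linarith⟩

private lemma ddisc_root_pm {z a b : ℝ} (hab : a ≤ b) (ha : 0 < ddisc z a)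
    (hb : ddisc z b < 0) : ∃ r, r ∈ Set.Ioo a b ∧ ddisc z r = 0 := by
  have hc : ContinuousOn (fun x => ddisc z x) (Set.Icc a b) := by
    apply Continuous.continuousOn
    simp only [ddisc]
    continuity
  obtain ⟨r, hr, hr0⟩ := intermediate_value_Ioo' hab hc (Set.mem_Ioo.mpr ⟨hb, ha⟩)
  exact ⟨r, hr, hr0⟩

private lemma ddisc_root_mp {z a b : ℝ} (hab : a ≤ b) (ha : ddisc z a < 0)
    (hb : 0 < ddisc z b) : ∃ r, r ∈ Set.Ioo a b ∧ ddisc z r = 0 := by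
  have hc : ContinuousOn (fun x => ddisc z x) (Set.Icc a b) := by
    apply Continuous.continuousOn
    simp only [ddisc]
    continuity
  obtain ⟨r, hr, hr0⟩ := intermediate_value_Ioo hab hc (Set.mem_Ioo.mpr ⟨ha, hb⟩)
  exact ⟨r, hr, hr0⟩

private lemma aux_s1 (z : ℝ)
    (hz0 : 0 < z) (hze : z < 1/1000000000000000000000000000000)
    (hpw : ∀ i : ℕ, 1 ≤ i → z ^ i ≤ z) (hnn : ∀ i : ℕ, 0 ≤ z ^ i) : 0 < ddisc z ((z - 2*z^2 + 3*z^3 - (7/4)*z^4 - (65/8)*z^5 + (2437/64)*z^6 - (11975/128)*z^7) - z^7) := by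
  have h : ddisc z ((z - 2*z^2 + 3*z^3 - (7/4)*z^4 - (65/8)*z^5 + (2437/64)*z^6 - (11975/128)*z^7) - z^7) = z^9 * ((4) + (63093/128)*z + (45589/64)*z^2 + (-19791663/4096)*z^3 + (53399709/4096)*z^4 + (-325977951/16384)*z^5 + (-64631/64)*z^6 + (543426779/4096)*z^7 + (-1617902087/4096)*z^8 + (2074043259/4096)*z^9 + (-2103756369/8192)*z^10 + (-48180945457/65536)*z^11 + (329894460441/131072)*z^12 + (-1070934354399/262144)*z^13 + (1772879016727/524288)*z^14) := by simp only [ddisc]; ring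
  rw [h]
  exact mul_pos (pow_pos hz0 9) (by linarith only [hz0.le, hze, hnn 1, hnn 2, hpw 3 (by norm_num), hnn 4, hpw 5 (by norm_num), hpw 6 (by norm_num), hnn 7, hpw 8 (by norm_num), hnn 9, hpw 10 (by norm_num), hpw 11 (by norm_num), hnn 12, hpw 13 (by norm_num), hnn 14] : (0:ℝ) < (4) + (63093/128)*z + (45589/64)*z^2 + (-19791663/4096)*z^3 + (53399709/4096)*z^4 + (-325977951/16384)*z^5 + (-64631/64)*z^6 + (543426779/4096)*z^7 + (-1617902087/4096)*z^8 + (2074043259/4096)*z^9 + (-2103756369/8192)*z^10 + (-48180945457/65536)*z^11 + (329894460441/131072)*z^12 + (-1070934354399/262144)*z^13 + (1772879016727/524288)*z^14)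

private lemma aux_s2 (z : ℝ)
    (hz0 : 0 < z) (hze : z < 1/1000000000000000000000000000000)
    (hpw : ∀ i : ℕ, 1 ≤ i → z ^ i ≤ z) (hnn : ∀ i : ℕ, 0 ≤ z ^ i) : ddisc z ((z - 2*z^2 + 3*z^3 - (7/4)*z^4 - (65/8)*z^5 + (2437/64)*z^6 - (11975/128)*z^7) + z^7) < 0 := by
  have h : ddisc z ((z - 2*z^2 + 3*z^3 - (7/4)*z^4 - (65/8)*z^5 + (2437/64)*z^6 - (11975/128)*z^7) + z^7) = -(z^9 * ((4) + (-62581/128)*z + (-45653/64)*z^2 + (19728175/4096)*z^3 + (-53155229/4096)*z^4 + (323884383/16384)*z^5 + (103239/64)*z^6 + (-539908827/4096)*z^7 + (1580044295/4096)*z^8 + (-2012001147/4096)*z^9 + (1980171345/8192)*z^10 + (47722725937/65536)*z^11 + (-320550996249/131072)*z^12 + (1026109151199/262144)*z^13 + (-1662743142423/524288)*z^14)) := by simp only [ddisc]; ring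
  rw [h]
  have := mul_pos (pow_pos hz0 9) (by linarith only [hz0.le, hze, hpw 1 (by norm_num), hpw 2 (by norm_num), hnn 3, hpw 4 (by norm_num), hnn 5, hnn 6, hpw 7 (by norm_num), hnn 8, hpw 9 (by norm_num), hnn 10, hnn 11, hpw 12 (by norm_num), hnn 13, hpw 14 (by norm_num)] : (0:ℝ) < (4) + (-62581/128)*z + (-45653/64)*z^2 + (19728175/4096)*z^3 + (-53155229/4096)*z^4 + (323884383/16384)*z^5 + (103239/64)*z^6 + (-539908827/4096)*z^7 + (1580044295/4096)*z^8 + (-2012001147/4096)*z^9 + (1980171345/8192)*z^10 + (47722725937/65536)*z^11 + (-320550996249/131072)*z^12 + (1026109151199/262144)*z^13 + (-1662743142423/524288)*z^14)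
  linarith

private lemma aux_s3 (z : ℝ)
    (hz0 : 0 < z) (hze : z < 1/1000000000000000000000000000000)
    (hpw : ∀ i : ℕ, 1 ≤ i → z ^ i ≤ z) (hnn : ∀ i : ℕ, 0 ≤ z ^ i) : ddisc z ((z + 2*z^2 + 5*z^3 + (55/4)*z^4 + (321/8)*z^5 + (7803/64)*z^6 + (48839/128)*z^7) - z^7) < 0 := by
  have h : ddisc z ((z + 2*z^2 + 5*z^3 + (55/4)*z^4 + (321/8)*z^5 + (7803/64)*z^6 + (48839/128)*z^7) - z^7) = -(z^9 * ((4) + (625547/128)*z + (1174955/64)*z^2 + (245565231/4096)*z^3 + (781576803/4096)*z^4 + (9886317919/16384)*z^5 + (121919787/64)*z^6 + (18594926325/4096)*z^7 + (38606520447/4096)*z^8 + (77376580587/4096)*z^9 + (315477942399/8192)*z^10 + (4969350626319/65536)*z^11 + (18037449438489/131072)*z^12 + (55543974445089/262144)*z^13 + (115579586449431/524288)*z^14)) := by simp only [ddisc]; ring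
  rw [h]
  have := mul_pos (pow_pos hz0 9) (by linarith only [hz0.le, hze, hnn 1, hnn 2, hnn 3, hnn 4, hnn 5, hnn 6, hnn 7, hnn 8, hnn 9, hnn 10, hnn 11, hnn 12, hnn 13, hnn 14] : (0:ℝ) < (4) + (625547/128)*z + (1174955/64)*z^2 + (245565231/4096)*z^3 + (781576803/4096)*z^4 + (9886317919/16384)*z^5 + (121919787/64)*z^6 + (18594926325/4096)*z^7 + (38606520447/4096)*z^8 + (77376580587/4096)*z^9 + (315477942399/8192)*z^10 + (4969350626319/65536)*z^11 + (18037449438489/131072)*z^12 + (55543974445089/262144)*z^13 + (115579586449431/524288)*z^14)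
  linarith

private lemma aux_s4 (z : ℝ)
    (hz0 : 0 < z) (hze : z < 1/1000000000000000000000000000000)
    (hpw : ∀ i : ℕ, 1 ≤ i → z ^ i ≤ z) (hnn : ∀ i : ℕ, 0 ≤ z ^ i) : 0 < ddisc z ((z + 2*z^2 + 5*z^3 + (55/4)*z^4 + (321/8)*z^5 + (7803/64)*z^6 + (48839/128)*z^7) + z^7) := by
  have h : ddisc z ((z + 2*z^2 + 5*z^3 + (55/4)*z^4 + (321/8)*z^5 + (7803/64)*z^6 + (48839/128)*z^7) + z^7) = z^9 * ((4) + (-625035/128)*z + (-1175019/64)*z^2 + (-245628719/4096)*z^3 + (-781856611/4096)*z^4 + (-9890508639/16384)*z^5 + (-122290779/64)*z^6 + (-18673197301/4096)*z^7 + (-38787508863/4096)*z^8 + (-77754940395/4096)*z^9 + (-317203848831/8192)*z^10 + (-5001243565071/65536)*z^11 + (-18180531955737/131072)*z^12 + (-56129329786401/262144)*z^13 + (-117411461047063/524288)*z^14) := by simp only [ddisc]; ring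
  rw [h]
  exact mul_pos (pow_pos hz0 9) (by linarith only [hz0.le, hze, hpw 1 (by norm_num), hpw 2 (by norm_num), hpw 3 (by norm_num), hpw 4 (by norm_num), hpw 5 (by norm_num), hpw 6 (by norm_num), hpw 7 (by norm_num), hpw 8 (by norm_num), hpw 9 (by norm_num), hpw 10 (by norm_num), hpw 11 (by norm_num), hpw 12 (by norm_num), hpw 13 (by norm_num), hpw 14 (by norm_num)] : (0:ℝ) < (4) + (-625035/128)*z + (-1175019/64)*z^2 + (-245628719/4096)*z^3 + (-781856611/4096)*z^4 + (-9890508639/16384)*z^5 + (-122290779/64)*z^6 + (-18673197301/4096)*z^7 + (-38787508863/4096)*z^8 + (-77754940395/4096)*z^9 + (-317203848831/8192)*z^10 + (-5001243565071/65536)*z^11 + (-18180531955737/131072)*z^12 + (-56129329786401/262144)*z^13 + (-117411461047063/524288)*z^14)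

private lemma aux_s5 (z : ℝ)
    (hz0 : 0 < z) (hze : z < 1/1000000000000000000000000000000)
    (hpw : ∀ i : ℕ, 1 ≤ i → z ^ i ≤ z) (hnn : ∀ i : ℕ, 0 ≤ z ^ i) : 0 < ddisc z ((1 - 8*z^2)/(4*z^2)) := by
  have hzne : z ≠ 0 := ne_of_gt hz0
  have h : ddisc z ((1 - 8*z^2)/(4*z^2)) = (z^2 * ((4) + (-8)*z + (-64)*z^2 + (64)*z^3 + (272)*z^4))/(16*z^4) := by
    simp only [ddisc]; field_simp; ring
  rw [h]
  exact div_pos (mul_pos (pow_pos hz0 2) (by linarith only [hz0.le, hze, hpw 1 (by norm_num), hpw 2 (by norm_num), hnn 3, hnn 4] : (0:ℝ) < (4) + (-8)*z + (-64)*z^2 + (64)*z^3 + (272)*z^4)) (by positivity)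

private lemma aux_s6 (z : ℝ)
    (hz0 : 0 < z) (hze : z < 1/1000000000000000000000000000000)
    (hpw : ∀ i : ℕ, 1 ≤ i → z ^ i ≤ z) (hnn : ∀ i : ℕ, 0 ≤ z ^ i) : ddisc z ((1 - 2*z^2)/(4*z^2)) < 0 := by
  have hzne : z ≠ 0 := ne_of_gt hz0
  have h : ddisc z ((1 - 2*z^2)/(4*z^2)) = -((z^2 * ((2) + (8)*z + (-8)*z^2 + (-16)*z^3 + (-8)*z^4))/(16*z^4)) := by
    simp only [ddisc]; field_simp; ring
  rw [h]
  have := div_pos (mul_pos (pow_pos hz0 2) (by linarith only [hz0.le, hze, hnn 1, hpw 2 (by norm_num), hpw 3 (by norm_num), hpw 4 (by norm_num)] : (0:ℝ) < (2) + (8)*z + (-8)*z^2 + (-16)*z^3 + (-8)*z^4)) (show (0:ℝ) < 16*z^4 by positivity)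
  linarith

private lemma aux_F1 (z : ℝ)
    (hz0 : 0 < z) (hze : z < 1/1000000000000000000000000000000)
    (hpw : ∀ i : ℕ, 1 ≤ i → z ^ i ≤ z) (hnn : ∀ i : ℕ, 0 ≤ z ^ i) : 0 < (z - 2*z^2 + 3*z^3 - (7/4)*z^4 - (65/8)*z^5 + (2437/64)*z^6 - (11975/128)*z^7) - z^7 := by
  have h : (z - 2*z^2 + 3*z^3 - (7/4)*z^4 - (65/8)*z^5 + (2437/64)*z^6 - (11975/128)*z^7) - z^7 = z * ((1) + (-2)*z + (3)*z^2 + (-7/4)*z^3 + (-65/8)*z^4 + (2437/64)*z^5 + (-12103/128)*z^6) := by ring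
  rw [h]
  exact mul_pos hz0 (by linarith only [hz0.le, hze, hpw 1 (by norm_num), hnn 2, hpw 3 (by norm_num), hpw 4 (by norm_num), hnn 5, hpw 6 (by norm_num)] : (0:ℝ) < (1) + (-2)*z + (3)*z^2 + (-7/4)*z^3 + (-65/8)*z^4 + (2437/64)*z^5 + (-12103/128)*z^6)

private lemma aux_F2 (z : ℝ)
    (hz0 : 0 < z) (hze : z < 1/1000000000000000000000000000000)
    (hpw : ∀ i : ℕ, 1 ≤ i → z ^ i ≤ z) (hnn : ∀ i : ℕ, 0 ≤ z ^ i) : 0 < ((z + 2*z^2 + 5*z^3 + (55/4)*z^4 + (321/8)*z^5 + (7803/64)*z^6 + (48839/128)*z^7) - z^7) - ((z - 2*z^2 + 3*z^3 - (7/4)*z^4 - (65/8)*z^5 + (2437/64)*z^6 - (11975/128)*z^7) + z^7) := by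
  have h : ((z + 2*z^2 + 5*z^3 + (55/4)*z^4 + (321/8)*z^5 + (7803/64)*z^6 + (48839/128)*z^7) - z^7) - ((z - 2*z^2 + 3*z^3 - (7/4)*z^4 - (65/8)*z^5 + (2437/64)*z^6 - (11975/128)*z^7) + z^7) = z^2 * ((4) + (2)*z + (31/2)*z^2 + (193/4)*z^3 + (2683/32)*z^4 + (30279/64)*z^5) := by ring
  rw [h]
  exact mul_pos (pow_pos hz0 2) (by linarith only [hz0.le, hze, hnn 1, hnn 2, hnn 3, hnn 4, hnn 5] : (0:ℝ) < (4) + (2)*z + (31/2)*z^2 + (193/4)*z^3 + (2683/32)*z^4 + (30279/64)*z^5)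

private lemma aux_F3 (z : ℝ)
    (hz0 : 0 < z) (hze : z < 1/1000000000000000000000000000000)
    (hpw : ∀ i : ℕ, 1 ≤ i → z ^ i ≤ z) (hnn : ∀ i : ℕ, 0 ≤ z ^ i) : 0 < 1 - 8*z^2 - 4*z^2*((z + 2*z^2 + 5*z^3 + (55/4)*z^4 + (321/8)*z^5 + (7803/64)*z^6 + (48839/128)*z^7) + z^7) := by
  linarith only [hz0.le, hze, hpw 2 (by norm_num), hpw 3 (by norm_num), hpw 4 (by norm_num), hpw 5 (by norm_num), hpw 6 (by norm_num), hpw 7 (by norm_num), hpw 8 (by norm_num), hpw 9 (by norm_num)]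

private lemma aux_F5 (z : ℝ)
    (hz0 : 0 < z) (hze : z < 1/1000000000000000000000000000000)
    (hpw : ∀ i : ℕ, 1 ≤ i → z ^ i ≤ z) (hnn : ∀ i : ℕ, 0 ≤ z ^ i) : 0 ≤ 1 - (1 - 8*z^4 - 4*z^5 + 100*z^6)^2 := by
  have h : 1 - (1 - 8*z^4 - 4*z^5 + 100*z^6)^2 = z^4 * ((16) + (8)*z + (-200)*z^2 + (-64)*z^4 + (-64)*z^5 + (1584)*z^6 + (800)*z^7 + (-10000)*z^8) := by ring
  rw [h]
  exact (mul_pos (pow_pos hz0 4) (by linarith only [hz0.le, hze, hnn 1, hpw 2 (by norm_num), hpw 4 (by norm_num), hpw 5 (by norm_num), hnn 6, hnn 7, hpw 8 (by norm_num)] : (0:ℝ) < (16) + (8)*z + (-200)*z^2 + (-64)*z^4 + (-64)*z^5 + (1584)*z^6 + (800)*z^7 + (-10000)*z^8)).le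

private lemma aux_F6b (z : ℝ)
    (hz0 : 0 < z) (hze : z < 1/1000000000000000000000000000000)
    (hpw : ∀ i : ℕ, 1 ≤ i → z ^ i ≤ z) (hnn : ∀ i : ℕ, 0 ≤ z ^ i) : 0 ≤ 1 - (1 - 8*z^4 - 4*z^5 - 100*z^6)^2 := by
  have h : 1 - (1 - 8*z^4 - 4*z^5 - 100*z^6)^2 = z^4 * ((16) + (8)*z + (200)*z^2 + (-64)*z^4 + (-64)*z^5 + (-1616)*z^6 + (-800)*z^7 + (-10000)*z^8) := by ring
  rw [h]
  exact (mul_pos (pow_pos hz0 4) (by linarith only [hz0.le, hze, hnn 1, hnn 2, hpw 4 (by norm_num), hpw 5 (by norm_num), hpw 6 (by norm_num), hpw 7 (by norm_num), hpw 8 (by norm_num)] : (0:ℝ) < (16) + (8)*z + (200)*z^2 + (-64)*z^4 + (-64)*z^5 + (-1616)*z^6 + (-800)*z^7 + (-10000)*z^8)).le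

private lemma aux_bl0 (z : ℝ)
    (hz0 : 0 < z) (hze : z < 1/1000000000000000000000000000000)
    (hpw : ∀ i : ℕ, 1 ≤ i → z ^ i ≤ z) (hnn : ∀ i : ℕ, 0 ≤ z ^ i) : 0 ≤ (1 - 8*z^4 - 4*z^5 - 100*z^6) := by
  linarith only [hz0.le, hze, hpw 4 (by norm_num), hpw 5 (by norm_num), hpw 6 (by norm_num)]

private lemma aux_bu0 (z : ℝ)
    (hz0 : 0 < z) (hze : z < 1/1000000000000000000000000000000)
    (hpw : ∀ i : ℕ, 1 ≤ i → z ^ i ≤ z) (hnn : ∀ i : ℕ, 0 ≤ z ^ i) : 0 ≤ (1 - 8*z^4 - 4*z^5 + 100*z^6) := by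
  linarith only [hz0.le, hze, hpw 4 (by norm_num), hpw 5 (by norm_num), hnn 6]

private lemma aux_gl0 (z : ℝ)
    (hz0 : 0 < z) (hze : z < 1/1000000000000000000000000000000)
    (hpw : ∀ i : ℕ, 1 ≤ i → z ^ i ≤ z) (hnn : ∀ i : ℕ, 0 ≤ z ^ i) : 0 ≤ (1 - 2*z + z^2 - (7/4)*z^3 - (65/8)*z^4 + (613/64)*z^5 - 100*z^6) := by
  linarith only [hz0.le, hze, hpw 1 (by norm_num), hnn 2, hpw 3 (by norm_num), hpw 4 (by norm_num), hnn 5, hpw 6 (by norm_num)]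

private lemma aux_gu0 (z : ℝ)
    (hz0 : 0 < z) (hze : z < 1/1000000000000000000000000000000)
    (hpw : ∀ i : ℕ, 1 ≤ i → z ^ i ≤ z) (hnn : ∀ i : ℕ, 0 ≤ z ^ i) : 0 ≤ (1 - 2*z + z^2 - (7/4)*z^3 - (65/8)*z^4 + (613/64)*z^5 + 100*z^6) := by
  linarith only [hz0.le, hze, hpw 1 (by norm_num), hnn 2, hpw 3 (by norm_num), hpw 4 (by norm_num), hnn 5, hnn 6]

private lemma aux_FK1 (z : ℝ)
    (hz0 : 0 < z) (hze : z < 1/1000000000000000000000000000000)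
    (hpw : ∀ i : ℕ, 1 ≤ i → z ^ i ≤ z) (hnn : ∀ i : ℕ, 0 ≤ z ^ i) : 0 ≤ 4*z^2*(((z + 2*z^2 + 5*z^3 + (55/4)*z^4 + (321/8)*z^5 + (7803/64)*z^6 + (48839/128)*z^7) - z^7) - (1 - 8*z^4 - 4*z^5 + 100*z^6)^2*((z - 2*z^2 + 3*z^3 - (7/4)*z^4 - (65/8)*z^5 + (2437/64)*z^6 - (11975/128)*z^7) + z^7)) - (1 - (1 - 8*z^4 - 4*z^5 + 100*z^6)^2)*(1 - 2*z^2) := by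
  have h : 4*z^2*(((z + 2*z^2 + 5*z^3 + (55/4)*z^4 + (321/8)*z^5 + (7803/64)*z^6 + (48839/128)*z^7) - z^7) - (1 - 8*z^4 - 4*z^5 + 100*z^6)^2*((z - 2*z^2 + 3*z^3 - (7/4)*z^4 - (65/8)*z^5 + (2437/64)*z^6 - (11975/128)*z^7) + z^7)) - (1 - (1 - 8*z^4 - 4*z^5 + 100*z^6)^2)*(1 - 2*z^2) = z^6 * ((294) + (273)*z + (-773/8)*z^2 + (20551/16)*z^3 + (-128)*z^4 + (-4160)*z^5 + (17001)*z^6 + (9475)*z^7 + (-252865/4)*z^8 + (196719/4)*z^9 + (70844)*z^10 + (-163134)*z^11 + (308957)*z^12 + (-279153/2)*z^13 + (-1819300)*z^14 + (7404375/2)*z^15) := by ring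
  rw [h]
  exact (mul_pos (pow_pos hz0 6) (by linarith only [hz0.le, hze, hnn 1, hpw 2 (by norm_num), hnn 3, hpw 4 (by norm_num), hpw 5 (by norm_num), hnn 6, hnn 7, hpw 8 (by norm_num), hnn 9, hnn 10, hpw 11 (by norm_num), hnn 12, hpw 13 (by norm_num), hpw 14 (by norm_num), hnn 15] : (0:ℝ) < (294) + (273)*z + (-773/8)*z^2 + (20551/16)*z^3 + (-128)*z^4 + (-4160)*z^5 + (17001)*z^6 + (9475)*z^7 + (-252865/4)*z^8 + (196719/4)*z^9 + (70844)*z^10 + (-163134)*z^11 + (308957)*z^12 + (-279153/2)*z^13 + (-1819300)*z^14 + (7404375/2)*z^15)).le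

private lemma aux_FK2 (z : ℝ)
    (hz0 : 0 < z) (hze : z < 1/1000000000000000000000000000000)
    (hpw : ∀ i : ℕ, 1 ≤ i → z ^ i ≤ z) (hnn : ∀ i : ℕ, 0 ≤ z ^ i) : 0 ≤ (1 - (1 - 8*z^4 - 4*z^5 - 100*z^6)^2)*(1 - 8*z^2) - 4*z^2*(((z + 2*z^2 + 5*z^3 + (55/4)*z^4 + (321/8)*z^5 + (7803/64)*z^6 + (48839/128)*z^7) + z^7) - (1 - 8*z^4 - 4*z^5 - 100*z^6)^2*((z - 2*z^2 + 3*z^3 - (7/4)*z^4 - (65/8)*z^5 + (2437/64)*z^6 - (11975/128)*z^7) - z^7)) := by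
  have h : (1 - (1 - 8*z^4 - 4*z^5 - 100*z^6)^2)*(1 - 8*z^2) - 4*z^2*(((z + 2*z^2 + 5*z^3 + (55/4)*z^4 + (321/8)*z^5 + (7803/64)*z^6 + (48839/128)*z^7) + z^7) - (1 - 8*z^4 - 4*z^5 - 100*z^6)^2*((z - 2*z^2 + 3*z^3 - (7/4)*z^4 - (65/8)*z^5 + (2437/64)*z^6 - (11975/128)*z^7) - z^7)) = z^6 * ((10) + (-321)*z + (-15227/8)*z^2 + (-46407/16)*z^3 + (512)*z^4 + (-1856)*z^5 + (1895)*z^6 + (24453)*z^7 + (172621/4)*z^8 + (504431/4)*z^9 + (-74044)*z^10 + (47422)*z^11 + (125931)*z^12 + (-1628703/2)*z^13 + (1220550)*z^14 + (-7564375/2)*z^15) := by ring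
  rw [h]
  exact (mul_pos (pow_pos hz0 6) (by linarith only [hz0.le, hze, hpw 1 (by norm_num), hpw 2 (by norm_num), hpw 3 (by norm_num), hnn 4, hpw 5 (by norm_num), hnn 6, hnn 7, hnn 8, hnn 9, hpw 10 (by norm_num), hnn 11, hnn 12, hpw 13 (by norm_num), hnn 14, hpw 15 (by norm_num)] : (0:ℝ) < (10) + (-321)*z + (-15227/8)*z^2 + (-46407/16)*z^3 + (512)*z^4 + (-1856)*z^5 + (1895)*z^6 + (24453)*z^7 + (172621/4)*z^8 + (504431/4)*z^9 + (-74044)*z^10 + (47422)*z^11 + (125931)*z^12 + (-1628703/2)*z^13 + (1220550)*z^14 + (-7564375/2)*z^15)).le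

private lemma aux_FW1 (z : ℝ)
    (hz0 : 0 < z) (hze : z < 1/1000000000000000000000000000000)
    (hpw : ∀ i : ℕ, 1 ≤ i → z ^ i ≤ z) (hnn : ∀ i : ℕ, 0 ≤ z ^ i) : 0 ≤ (1 - 2*z + z^2 - (7/4)*z^3 - (65/8)*z^4 + (613/64)*z^5 + 100*z^6)^2*((z + 2*z^2 + 5*z^3 + (55/4)*z^4 + (321/8)*z^5 + (7803/64)*z^6 + (48839/128)*z^7) - z^7) - ((z - 2*z^2 + 3*z^3 - (7/4)*z^4 - (65/8)*z^5 + (2437/64)*z^6 - (11975/128)*z^7) + z^7) := by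
  have h : (1 - 2*z + z^2 - (7/4)*z^3 - (65/8)*z^4 + (613/64)*z^5 + 100*z^6)^2*((z + 2*z^2 + 5*z^3 + (55/4)*z^4 + (321/8)*z^5 + (7803/64)*z^6 + (48839/128)*z^7) - z^7) - ((z - 2*z^2 + 3*z^3 - (7/4)*z^4 - (65/8)*z^5 + (2437/64)*z^6 - (11975/128)*z^7) + z^7) = z^7 * ((20903/64) + (-16315/16)*z + (252187/128)*z^2 + (-27017/16)*z^3 + (10086863/4096)*z^4 + (89328989/4096)*z^5 + (90470111/4096)*z^6 + (-1926056299/16384)*z^7 + (1364612477/32768)*z^8 + (-43253450453/262144)*z^9 + (26905146159/524288)*z^10 + (1994976075/1024)*z^11 + (30444375/8)*z^12) := by ring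
  rw [h]
  exact (mul_pos (pow_pos hz0 7) (by linarith only [hz0.le, hze, hpw 1 (by norm_num), hnn 2, hpw 3 (by norm_num), hnn 4, hnn 5, hnn 6, hpw 7 (by norm_num), hnn 8, hpw 9 (by norm_num), hnn 10, hnn 11, hnn 12] : (0:ℝ) < (20903/64) + (-16315/16)*z + (252187/128)*z^2 + (-27017/16)*z^3 + (10086863/4096)*z^4 + (89328989/4096)*z^5 + (90470111/4096)*z^6 + (-1926056299/16384)*z^7 + (1364612477/32768)*z^8 + (-43253450453/262144)*z^9 + (26905146159/524288)*z^10 + (1994976075/1024)*z^11 + (30444375/8)*z^12)).le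

private lemma aux_FW2 (z : ℝ)
    (hz0 : 0 < z) (hze : z < 1/1000000000000000000000000000000)
    (hpw : ∀ i : ℕ, 1 ≤ i → z ^ i ≤ z) (hnn : ∀ i : ℕ, 0 ≤ z ^ i) : 0 ≤ ((z - 2*z^2 + 3*z^3 - (7/4)*z^4 - (65/8)*z^5 + (2437/64)*z^6 - (11975/128)*z^7) - z^7) - (1 - 2*z + z^2 - (7/4)*z^3 - (65/8)*z^4 + (613/64)*z^5 - 100*z^6)^2*((z + 2*z^2 + 5*z^3 + (55/4)*z^4 + (321/8)*z^5 + (7803/64)*z^6 + (48839/128)*z^7) + z^7) := by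
  have h : ((z - 2*z^2 + 3*z^3 - (7/4)*z^4 - (65/8)*z^5 + (2437/64)*z^6 - (11975/128)*z^7) - z^7) - (1 - 2*z + z^2 - (7/4)*z^3 - (65/8)*z^4 + (613/64)*z^5 - 100*z^6)^2*((z + 2*z^2 + 5*z^3 + (55/4)*z^4 + (321/8)*z^5 + (7803/64)*z^6 + (48839/128)*z^7) + z^7) = z^7 * ((4441/64) + (16443/16)*z + (-151323/128)*z^2 + (52857/16)*z^3 + (-188879/4096)*z^4 + (-24187485/4096)*z^5 + (126719777/4096)*z^6 + (-3156079253/16384)*z^7 + (-1709167485/32768)*z^8 + (-90254962987/262144)*z^9 + (-432244274223/524288)*z^10 + (-498060725/1024)*z^11 + (-30604375/8)*z^12) := by ring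
  rw [h]
  exact (mul_pos (pow_pos hz0 7) (by linarith only [hz0.le, hze, hnn 1, hpw 2 (by norm_num), hnn 3, hpw 4 (by norm_num), hpw 5 (by norm_num), hnn 6, hpw 7 (by norm_num), hpw 8 (by norm_num), hpw 9 (by norm_num), hpw 10 (by norm_num), hpw 11 (by norm_num), hpw 12 (by norm_num)] : (0:ℝ) < (4441/64) + (16443/16)*z + (-151323/128)*z^2 + (52857/16)*z^3 + (-188879/4096)*z^4 + (-24187485/4096)*z^5 + (126719777/4096)*z^6 + (-3156079253/16384)*z^7 + (-1709167485/32768)*z^8 + (-90254962987/262144)*z^9 + (-432244274223/524288)*z^10 + (-498060725/1024)*z^11 + (-30604375/8)*z^12)).le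

/-- If, for each `z ∈ (0,1/4)`, `x₁(z) < x₂(z) < x₃(z)` are the three real roots of `d(·;z)`,
and `k(z) = √((x₃−x₂)/(x₃−x₁))`, `w(z) = √(x₁/x₂)`, then as `z → 0⁺`:
`k(z) = 1 − 8z⁴ − 4z⁵ + O(z⁶)` and
`w(z) = 1 − 2z + z² − (7/4)z³ − (65/8)z⁴ + (613/64)z⁵ + O(z⁶)`. -/
theorem moduli_asymptotics (x1 x2 x3 : ℝ → ℝ)
    (hroots : ∀ z ∈ Set.Ioo (0 : ℝ) (1 / 4),
      x1 z < x2 z ∧ x2 z < x3 z ∧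
      ∀ x : ℝ, ddisc z x = 0 ↔ (x = x1 z ∨ x = x2 z ∨ x = x3 z)) :
    ∃ C > (0 : ℝ), ∃ ε ∈ Set.Ioo (0 : ℝ) (1 / 4), ∀ z ∈ Set.Ioo (0 : ℝ) ε,
      |Real.sqrt ((x3 z - x2 z) / (x3 z - x1 z)) - (1 - 8 * z ^ 4 - 4 * z ^ 5)| ≤ C * z ^ 6 ∧
      |Real.sqrt (x1 z / x2 z) -
          (1 - 2 * z + z ^ 2 - (7 / 4) * z ^ 3 - (65 / 8) * z ^ 4 + (613 / 64) * z ^ 5)| ≤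
        C * z ^ 6 := by
  refine ⟨100, by norm_num, 1/1000000000000000000000000000000, ⟨by norm_num, by norm_num⟩, ?_⟩
  intro z hz
  obtain ⟨hz0, hze⟩ := hz
  have hz4 : z ∈ Set.Ioo (0 : ℝ) (1 / 4) := ⟨hz0, lt_trans hze (by norm_num)⟩
  obtain ⟨h12, h23, hiff⟩ := hroots z hz4
  have hz1 : z ≤ 1 := le_of_lt (lt_trans hze (by norm_num))
  have h4z : (0:ℝ) < 4*z^2 := by positivity
  have hpw : ∀ i : ℕ, 1 ≤ i → z ^ i ≤ z := by
    intro i hi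
    calc z ^ i ≤ z ^ 1 := pow_le_pow_of_le_one hz0.le hz1 hi
    _ = z := pow_one z
  have hnn : ∀ i : ℕ, 0 ≤ z ^ i := fun i => pow_nonneg hz0.le i
  have hn7 : (0:ℝ) ≤ z^7 := hnn 7
  have s1 := aux_s1 z hz0 hze hpw hnn
  have s2 := aux_s2 z hz0 hze hpw hnn
  have s3 := aux_s3 z hz0 hze hpw hnn
  have s4 := aux_s4 z hz0 hze hpw hnn
  have s5 := aux_s5 z hz0 hze hpw hnn
  have s6 := aux_s6 z hz0 hze hpw hnn
  have hF1 := aux_F1 z hz0 hze hpw hnn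
  have hF2 := aux_F2 z hz0 hze hpw hnn
  have hF3 := aux_F3 z hz0 hze hpw hnn
  have hF5 := aux_F5 z hz0 hze hpw hnn
  have hF6b := aux_F6b z hz0 hze hpw hnn
  have hbl0 := aux_bl0 z hz0 hze hpw hnn
  have hbu0 := aux_bu0 z hz0 hze hpw hnn
  have hgl0 := aux_gl0 z hz0 hze hpw hnn
  have hgu0 := aux_gu0 z hz0 hze hpw hnn
  have hFK1 := aux_FK1 z hz0 hze hpw hnn
  have hFK2 := aux_FK2 z hz0 hze hpw hnn
  have hFW1 := aux_FW1 z hz0 hze hpw hnn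
  have hFW2 := aux_FW2 z hz0 hze hpw hnn
  obtain ⟨r1, hr1I, hr1⟩ := ddisc_root_pm (by linarith only [hnn 7] : (z - 2*z^2 + 3*z^3 - (7/4)*z^4 - (65/8)*z^5 + (2437/64)*z^6 - (11975/128)*z^7) - z^7 ≤ (z - 2*z^2 + 3*z^3 - (7/4)*z^4 - (65/8)*z^5 + (2437/64)*z^6 - (11975/128)*z^7) + z^7) s1 s2
  obtain ⟨r2, hr2I, hr2⟩ := ddisc_root_mp (by linarith only [hnn 7] : (z + 2*z^2 + 5*z^3 + (55/4)*z^4 + (321/8)*z^5 + (7803/64)*z^6 + (48839/128)*z^7) - z^7 ≤ (z + 2*z^2 + 5*z^3 + (55/4)*z^4 + (321/8)*z^5 + (7803/64)*z^6 + (48839/128)*z^7) + z^7) s3 s4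
  obtain ⟨r3, hr3I, hr3⟩ := ddisc_root_pm (by
    rw [div_le_div_iff₀ (by positivity) (by positivity)]
    linarith only [hnn 4] : ((1 - 8*z^2)/(4*z^2)) ≤ ((1 - 2*z^2)/(4*z^2))) s5 s6
  obtain ⟨hr1a, hr1b⟩ := Set.mem_Ioo.mp hr1I
  obtain ⟨hr2a, hr2b⟩ := Set.mem_Ioo.mp hr2I
  obtain ⟨hr3a, hr3b⟩ := Set.mem_Ioo.mp hr3I
  have hF3' : (z + 2*z^2 + 5*z^3 + (55/4)*z^4 + (321/8)*z^5 + (7803/64)*z^6 + (48839/128)*z^7) + z^7 < ((1 - 8*z^2)/(4*z^2)) := by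
    rw [lt_div_iff₀ (by positivity)]
    linarith only [hF3]
  have hr12 : r1 < r2 := by linarith only [hr1b, hF2, hr2a]
  have hr23 : r2 < r3 := by linarith only [hr2b, hF3', hr3a]
  obtain ⟨hx1, hx2, hx3⟩ : x1 z = r1 ∧ x2 z = r2 ∧ x3 z = r3 :=
    order_id h12 h23 hr12 hr23 ((hiff r1).1 hr1) ((hiff r2).1 hr2) ((hiff r3).1 hr3)
  clear hr1 hr2 hr3 hiff hroots s1 s2 s3 s4 s5 s6 hr1I hr2I hr3I
  have hx1l : (z - 2*z^2 + 3*z^3 - (7/4)*z^4 - (65/8)*z^5 + (2437/64)*z^6 - (11975/128)*z^7) - z^7 < x1 z := by rw [hx1]; exact hr1a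
  have hx1u : x1 z < (z - 2*z^2 + 3*z^3 - (7/4)*z^4 - (65/8)*z^5 + (2437/64)*z^6 - (11975/128)*z^7) + z^7 := by rw [hx1]; exact hr1b
  have hx2l : (z + 2*z^2 + 5*z^3 + (55/4)*z^4 + (321/8)*z^5 + (7803/64)*z^6 + (48839/128)*z^7) - z^7 < x2 z := by rw [hx2]; exact hr2a
  have hx2u : x2 z < (z + 2*z^2 + 5*z^3 + (55/4)*z^4 + (321/8)*z^5 + (7803/64)*z^6 + (48839/128)*z^7) + z^7 := by rw [hx2]; exact hr2b
  have hx3l : ((1 - 8*z^2)/(4*z^2)) < x3 z := by rw [hx3]; exact hr3a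
  have hx3u : x3 z < ((1 - 2*z^2)/(4*z^2)) := by rw [hx3]; exact hr3b
  have hx3l' : 1 - 8*z^2 < x3 z * (4*z^2) := (div_lt_iff₀ h4z).mp hx3l
  have hx3u' : x3 z * (4*z^2) < 1 - 2*z^2 := (lt_div_iff₀ h4z).mp hx3u
  have hx31 : (0:ℝ) < x3 z - x1 z := by linarith only [h12, h23]
  have hx2pos : (0:ℝ) < x2 z := by linarith only [hF1, hF2, hx2l, hnn 7]
  have hbu2nn : (0:ℝ) ≤ (1 - 8*z^4 - 4*z^5 + 100*z^6)^2 := sq_nonneg _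
  have hbl2nn : (0:ℝ) ≤ (1 - 8*z^4 - 4*z^5 - 100*z^6)^2 := sq_nonneg _
  have hgu2nn : (0:ℝ) ≤ (1 - 2*z + z^2 - (7/4)*z^3 - (65/8)*z^4 + (613/64)*z^5 + 100*z^6)^2 := sq_nonneg _
  have hgl2nn : (0:ℝ) ≤ (1 - 2*z + z^2 - (7/4)*z^3 - (65/8)*z^4 + (613/64)*z^5 - 100*z^6)^2 := sq_nonneg _
  have tKu1 : (1 - (1 - 8*z^4 - 4*z^5 + 100*z^6)^2) * (x3 z * (4*z^2)) ≤ (1 - (1 - 8*z^4 - 4*z^5 + 100*z^6)^2) * (1 - 2*z^2) :=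
    mul_le_mul_of_nonneg_left hx3u'.le hF5
  have tKu2 : (4*z^2) * ((1 - 8*z^4 - 4*z^5 + 100*z^6)^2 * x1 z) ≤ (4*z^2) * ((1 - 8*z^4 - 4*z^5 + 100*z^6)^2 * ((z - 2*z^2 + 3*z^3 - (7/4)*z^4 - (65/8)*z^5 + (2437/64)*z^6 - (11975/128)*z^7) + z^7)) :=
    mul_le_mul_of_nonneg_left (mul_le_mul_of_nonneg_left hx1u.le hbu2nn) h4z.le
  have tKu3 : (4*z^2) * ((z + 2*z^2 + 5*z^3 + (55/4)*z^4 + (321/8)*z^5 + (7803/64)*z^6 + (48839/128)*z^7) - z^7) ≤ (4*z^2) * x2 z :=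
    mul_le_mul_of_nonneg_left hx2l.le h4z.le
  have hKu4 : (4*z^2) * (x3 z - x2 z) ≤ (4*z^2) * ((1 - 8*z^4 - 4*z^5 + 100*z^6)^2 * (x3 z - x1 z)) := by
    linarith only [hFK1, tKu1, tKu2, tKu3]
  have hKu : x3 z - x2 z ≤ (1 - 8*z^4 - 4*z^5 + 100*z^6)^2 * (x3 z - x1 z) := le_of_mul_le_mul_left hKu4 h4z
  clear hFK1 tKu1 tKu2 tKu3 hKu4
  have tKl1 : (1 - (1 - 8*z^4 - 4*z^5 - 100*z^6)^2) * (1 - 8*z^2) ≤ (1 - (1 - 8*z^4 - 4*z^5 - 100*z^6)^2) * (x3 z * (4*z^2)) :=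
    mul_le_mul_of_nonneg_left hx3l'.le hF6b
  have tKl2 : (4*z^2) * ((1 - 8*z^4 - 4*z^5 - 100*z^6)^2 * ((z - 2*z^2 + 3*z^3 - (7/4)*z^4 - (65/8)*z^5 + (2437/64)*z^6 - (11975/128)*z^7) - z^7)) ≤ (4*z^2) * ((1 - 8*z^4 - 4*z^5 - 100*z^6)^2 * x1 z) :=
    mul_le_mul_of_nonneg_left (mul_le_mul_of_nonneg_left hx1l.le hbl2nn) h4z.le
  have tKl3 : (4*z^2) * x2 z ≤ (4*z^2) * ((z + 2*z^2 + 5*z^3 + (55/4)*z^4 + (321/8)*z^5 + (7803/64)*z^6 + (48839/128)*z^7) + z^7) :=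
    mul_le_mul_of_nonneg_left hx2u.le h4z.le
  have hKl4 : (4*z^2) * ((1 - 8*z^4 - 4*z^5 - 100*z^6)^2 * (x3 z - x1 z)) ≤ (4*z^2) * (x3 z - x2 z) := by
    linarith only [hFK2, tKl1, tKl2, tKl3]
  have hKl : (1 - 8*z^4 - 4*z^5 - 100*z^6)^2 * (x3 z - x1 z) ≤ x3 z - x2 z := le_of_mul_le_mul_left hKl4 h4z
  clear hFK2 tKl1 tKl2 tKl3 hKl4
  have hWu : x1 z ≤ (1 - 2*z + z^2 - (7/4)*z^3 - (65/8)*z^4 + (613/64)*z^5 + 100*z^6)^2 * x2 z := by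
    have t := mul_le_mul_of_nonneg_left hx2l.le hgu2nn
    linarith only [hFW1, t, hx1u]
  have hWl : (1 - 2*z + z^2 - (7/4)*z^3 - (65/8)*z^4 + (613/64)*z^5 - 100*z^6)^2 * x2 z ≤ x1 z := by
    have t := mul_le_mul_of_nonneg_left hx2u.le hgl2nn
    linarith only [hFW2, t, hx1l]
  clear hFW1 hFW2 hF1 hF2 hF3 hF3' hx1l hx1u hx2l hx2u hx3l hx3u hx3l' hx3u'
  have hQk_ub : (x3 z - x2 z) / (x3 z - x1 z) ≤ (1 - 8*z^4 - 4*z^5 + 100*z^6)^2 := by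
    rw [div_le_iff₀ hx31]; exact hKu
  have hQk_lb : (1 - 8*z^4 - 4*z^5 - 100*z^6)^2 ≤ (x3 z - x2 z) / (x3 z - x1 z) := by
    rw [le_div_iff₀ hx31]; exact hKl
  have hQw_ub : x1 z / x2 z ≤ (1 - 2*z + z^2 - (7/4)*z^3 - (65/8)*z^4 + (613/64)*z^5 + 100*z^6)^2 := by
    rw [div_le_iff₀ hx2pos]; exact hWu
  have hQw_lb : (1 - 2*z + z^2 - (7/4)*z^3 - (65/8)*z^4 + (613/64)*z^5 - 100*z^6)^2 ≤ x1 z / x2 z := by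
    rw [le_div_iff₀ hx2pos]; exact hWl
  have hsk_ub : Real.sqrt ((x3 z - x2 z) / (x3 z - x1 z)) ≤ (1 - 8*z^4 - 4*z^5 + 100*z^6) := by
    calc Real.sqrt ((x3 z - x2 z) / (x3 z - x1 z)) ≤ Real.sqrt ((1 - 8*z^4 - 4*z^5 + 100*z^6)^2) :=
          Real.sqrt_le_sqrt hQk_ub
    _ = (1 - 8*z^4 - 4*z^5 + 100*z^6) := Real.sqrt_sq hbu0
  have hsk_lb : (1 - 8*z^4 - 4*z^5 - 100*z^6) ≤ Real.sqrt ((x3 z - x2 z) / (x3 z - x1 z)) := by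
    calc (1 - 8*z^4 - 4*z^5 - 100*z^6) = Real.sqrt ((1 - 8*z^4 - 4*z^5 - 100*z^6)^2) := (Real.sqrt_sq hbl0).symm
    _ ≤ Real.sqrt ((x3 z - x2 z) / (x3 z - x1 z)) := Real.sqrt_le_sqrt hQk_lb
  have hsw_ub : Real.sqrt (x1 z / x2 z) ≤ (1 - 2*z + z^2 - (7/4)*z^3 - (65/8)*z^4 + (613/64)*z^5 + 100*z^6) := by
    calc Real.sqrt (x1 z / x2 z) ≤ Real.sqrt ((1 - 2*z + z^2 - (7/4)*z^3 - (65/8)*z^4 + (613/64)*z^5 + 100*z^6)^2) := Real.sqrt_le_sqrt hQw_ub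
    _ = (1 - 2*z + z^2 - (7/4)*z^3 - (65/8)*z^4 + (613/64)*z^5 + 100*z^6) := Real.sqrt_sq hgu0
  have hsw_lb : (1 - 2*z + z^2 - (7/4)*z^3 - (65/8)*z^4 + (613/64)*z^5 - 100*z^6) ≤ Real.sqrt (x1 z / x2 z) := by
    calc (1 - 2*z + z^2 - (7/4)*z^3 - (65/8)*z^4 + (613/64)*z^5 - 100*z^6) = Real.sqrt ((1 - 2*z + z^2 - (7/4)*z^3 - (65/8)*z^4 + (613/64)*z^5 - 100*z^6)^2) := (Real.sqrt_sq hgl0).symm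
    _ ≤ Real.sqrt (x1 z / x2 z) := Real.sqrt_le_sqrt hQw_lb
  constructor
  · rw [abs_le]
    exact ⟨by linarith only [hsk_lb], by linarith only [hsk_ub]⟩
  · rw [abs_le]
    exact ⟨by linarith only [hsw_lb], by linarith only [hsw_ub]⟩
end
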